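/- arXiv:1401.1394 — 3 statements merged into one kernel-verified Lean document; each statement's English description precedes it below -/
import Mathlib

section
/- Let (x_q) be a multi-sequence of nonnegative reals indexed by q ∈ ℤ_+^k which is decreasing in each index and bounded above by a constant C, and let L be its limit along the directed set ℤ_+^k. Then lim_{m→∞} (1 / C(m+k-1, k-1)) · Σ_{q_1+...+q_k = m} x_q = L. -/
/-!
Slice averages of a bounded function converge to its limit along a filter `l` as soon as,
for every `U ∈ l`, the fraction of the slice lying outside `U` tends to `0`. For `l = atTop`
it suffices to take `U` a box `{q | ∀ i, N ≤ q i}`. A point of the slice `q₁ + ⋯ + q_k = m`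
outside the box has a coordinate `q i = v < N`, and for fixed `i, v` there are at most
`C(m+k-2, k-2) = (k-1)/(m+k-1) · C(m+k-1, k-1)` such points; so the slice leaves the box
in a fraction `O(k² N / m)` of its points.
-/

open Filter Finset

section Average

variable {ι α E : Type*} [SeminormedAddCommGroup E]

theorem norm_sum_sub_le_card_mul_add {s : Finset ι} (p : ι → Prop) [DecidablePred p]
    {f : ι → E} {a : E} {δ B : ℝ} (hδ₀ : 0 ≤ δ) (hδ : ∀ i, p i → ‖f i - a‖ ≤ δ)
    (hB : ∀ i, ‖f i - a‖ ≤ B) :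
    ‖∑ i ∈ s, (f i - a)‖ ≤ #s * δ + #{i ∈ s | ¬ p i} * B := by
  calc ‖∑ i ∈ s, (f i - a)‖ ≤ ∑ i ∈ s, ‖f i - a‖ := norm_sum_le _ _
    _ = ∑ i ∈ s with p i, ‖f i - a‖ + ∑ i ∈ s with ¬ p i, ‖f i - a‖ :=
        (sum_filter_add_sum_filter_not _ _ _).symm
    _ ≤ #{i ∈ s | p i} * δ + #{i ∈ s | ¬ p i} * B := by
        gcongr
        · exact (sum_le_card_nsmul _ _ _ fun i hi => hδ i (mem_filter.mp hi).2).trans_eq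
            (nsmul_eq_mul _ _)
        · exact (sum_le_card_nsmul _ _ _ fun i _ => hB i).trans_eq (nsmul_eq_mul _ _)
    _ ≤ #s * δ + #{i ∈ s | ¬ p i} * B := by
        gcongr
        exact filter_subset _ _

open scoped Classical in
theorem tendsto_average_of_tendsto [NormedSpace ℝ E] {l : Filter ι} {la : Filter α}
    {f : ι → E} {a : E} {B : ℝ} {s : α → Finset ι}
    (hf : Tendsto f l (nhds a)) (hB : ∀ i, ‖f i‖ ≤ B)
    (hne : ∀ᶠ m in la, (s m).Nonempty)
    (hs : ∀ U ∈ l, Tendsto (fun m => (#{i ∈ s m | i ∉ U} : ℝ) / #(s m)) la (nhds 0)) :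
    Tendsto (fun m => (#(s m) : ℝ)⁻¹ • ∑ i ∈ s m, f i) la (nhds a) := by
  refine Metric.tendsto_nhds.mpr fun ε hε => ?_
  set U := {i | ‖f i - a‖ < ε / 2}
  have hU : U ∈ l := (Metric.tendsto_nhds.mp hf _ (half_pos hε)).mono fun i hi => by
    rwa [dist_eq_norm] at hi
  have hsmall := ((hs U hU).mul_const (B + ‖a‖)).eventually_lt_const (u := ε / 2)
    (by rw [zero_mul]; exact half_pos hε)
  filter_upwards [hne, hsmall] with m hm hsmall
  have hT : (0 : ℝ) < #(s m) := by exact_mod_cast hm.card_pos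
  have hsum := norm_sum_sub_le_card_mul_add (s := s m) (· ∈ U) (half_pos hε).le
    (fun _ hi => hi.le) (fun i => (norm_sub_le (f i) a).trans (add_le_add_left (hB i) _))
  have hmean :
      (#(s m) : ℝ)⁻¹ • ∑ i ∈ s m, f i - a = (#(s m) : ℝ)⁻¹ • ∑ i ∈ s m, (f i - a) := by
    rw [sum_sub_distrib, sum_const, ← Nat.cast_smul_eq_nsmul ℝ, smul_sub, smul_smul,
      inv_mul_cancel₀ hT.ne', one_smul]
  rw [dist_eq_norm, hmean, norm_smul, norm_inv, Real.norm_natCast]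
  calc (#(s m) : ℝ)⁻¹ * ‖∑ i ∈ s m, (f i - a)‖
      ≤ ε / 2 + #{i ∈ s m | i ∉ U} / #(s m) * (B + ‖a‖) := by
        rw [inv_mul_le_iff₀ hT]
        refine hsum.trans_eq ?_
        field_simp
    _ < ε := by linarith

end Average

namespace Finset.Nat

theorem card_antidiagonalTuple (k m : ℕ) : #(antidiagonalTuple k m) = (k + m - 1).choose m := by
  classical
  have e : Sym (Fin k) m ≃ {q // q ∈ antidiagonalTuple k m} :=
    (Sym.equivNatSumOfFintype _ _).trans
      (Equiv.subtypeEquivRight fun _ => mem_antidiagonalTuple.symm)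
  rw [← Fintype.card_coe, ← Fintype.card_congr e, Sym.card_sym_eq_choose, Fintype.card_fin]

theorem antidiagonalTuple_succ_nonempty (n m : ℕ) : (antidiagonalTuple (n + 1) m).Nonempty :=
  card_pos.mp <| by rw [card_antidiagonalTuple]; exact Nat.choose_pos (by omega)

theorem card_filter_apply_eq_le {n : ℕ} (i : Fin (n + 1)) (m v : ℕ) :
    #{q ∈ antidiagonalTuple (n + 1) m | q i = v} ≤ #(antidiagonalTuple n (m - v)) := by
  refine card_le_card_of_injOn i.removeNth (fun q hq => ?_) (fun q hq q' hq' h => ?_)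
  · simp only [coe_filter, Set.mem_ofPred_eq, mem_antidiagonalTuple] at hq
    simp only [mem_coe, mem_antidiagonalTuple, Fin.removeNth_apply]
    have := Fin.sum_univ_succAbove q i
    omega
  · simp only [coe_filter, Set.mem_ofPred_eq] at hq hq'
    rw [← Fin.insertNth_self_removeNth i q, ← Fin.insertNth_self_removeNth i q', h, hq.2, hq'.2]

theorem add_mul_card_antidiagonalTuple_le (n : ℕ) {j m : ℕ} (hj : j ≠ 0) (hjm : j ≤ m) :
    (n + m) * #(antidiagonalTuple n j) ≤ n * #(antidiagonalTuple (n + 1) m) := by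
  rw [card_antidiagonalTuple, card_antidiagonalTuple]
  rcases n with _ | r
  · simp [Nat.choose_eq_zero_of_lt (by omega : j - 1 < j)]
  · have hmono : (r + j).choose j ≤ (r + m).choose m := by
      rw [← Nat.choose_symm_add, ← Nat.choose_symm_add (a := r)]
      exact Nat.choose_le_choose r (by omega)
    have hpascal := Nat.add_one_mul_choose_eq (r + m) r
    rw [Nat.choose_symm_add, Nat.choose_symm_of_eq_add (by ring : r + m + 1 = (r + 1) + m)]
      at hpascal
    rw [show r + 1 + j - 1 = r + j by omega, show r + 1 + 1 + m - 1 = r + m + 1 by omega,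
      show r + 1 + m = r + m + 1 by omega]
    calc (r + m + 1) * (r + j).choose j
        ≤ (r + m + 1) * (r + m).choose m := Nat.mul_le_mul_left _ hmono
      _ = (r + 1) * (r + m + 1).choose m := by rw [hpascal, mul_comm]

theorem add_mul_card_filter_exists_lt_le {n m N : ℕ} (hN : N ≤ m) :
    (n + m) * #{q ∈ antidiagonalTuple (n + 1) m | ∃ i, q i < N}
      ≤ (n + 1) * N * n * #(antidiagonalTuple (n + 1) m) := by
  set T := #(antidiagonalTuple (n + 1) m)
  let slice (i : Fin (n + 1)) (v : ℕ) := {q ∈ antidiagonalTuple (n + 1) m | q i = v}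
  have hsub : {q ∈ antidiagonalTuple (n + 1) m | ∃ i, q i < N}
      ⊆ univ.biUnion fun i => (range N).biUnion (slice i) := by
    intro q hq
    obtain ⟨hq, i, hi⟩ := mem_filter.mp hq
    simp only [mem_biUnion, mem_univ, mem_range, true_and]
    exact ⟨i, q i, hi, mem_filter.mpr ⟨hq, rfl⟩⟩
  have hslice : ∀ i, ∀ v ∈ range N, (n + m) * #(slice i v) ≤ n * T := fun i v hv =>
    (Nat.mul_le_mul_left _ (card_filter_apply_eq_le i m v)).trans
      (add_mul_card_antidiagonalTuple_le n (by rw [mem_range] at hv; omega) (Nat.sub_le m v))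
  calc (n + m) * #{q ∈ antidiagonalTuple (n + 1) m | ∃ i, q i < N}
      ≤ (n + m) * ∑ i, ∑ v ∈ range N, #(slice i v) :=
        Nat.mul_le_mul_left _ <| (card_le_card hsub).trans <|
          card_biUnion_le.trans (sum_le_sum fun _ _ => card_biUnion_le)
    _ = ∑ i, ∑ v ∈ range N, (n + m) * #(slice i v) := by simp only [mul_sum]
    _ ≤ ∑ _i : Fin (n + 1), ∑ _v ∈ range N, n * T :=
        sum_le_sum fun i _ => sum_le_sum (hslice i)
    _ = (n + 1) * N * n * T := by
        simp only [sum_const, card_range, card_univ, Fintype.card_fin, smul_eq_mul, mul_assoc]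

open scoped Classical in
theorem tendsto_card_filter_notMem_div_card {n : ℕ} {U : Set (Fin (n + 1) → ℕ)}
    (hU : U ∈ atTop) :
    Tendsto (fun m => (#{q ∈ antidiagonalTuple (n + 1) m | q ∉ U} : ℝ) /
      #(antidiagonalTuple (n + 1) m)) atTop (nhds 0) := by
  obtain ⟨q₀, hq₀⟩ := mem_atTop_sets.mp hU
  set N := univ.sup q₀
  have hout : ∀ m, #{q ∈ antidiagonalTuple (n + 1) m | q ∉ U}
      ≤ #{q ∈ antidiagonalTuple (n + 1) m | ∃ i, q i < N} := by
    refine fun m => card_le_card fun q => ?_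
    simp only [mem_filter, and_imp]
    refine fun hq hqU => ⟨hq, ?_⟩
    by_contra! h
    exact hqU (hq₀ q fun i => (le_sup (mem_univ i)).trans (h i))
  have hbound : ∀ᶠ m in atTop, (#{q ∈ antidiagonalTuple (n + 1) m | q ∉ U} : ℝ) /
      #(antidiagonalTuple (n + 1) m) ≤ ((n + 1) * N * n : ℕ) / m := by
    filter_upwards [eventually_ge_atTop (max N 1)] with m hm
    have hT := (antidiagonalTuple_succ_nonempty n m).card_pos
    rw [div_le_div_iff₀ (by exact_mod_cast hT) (by exact_mod_cast (by omega : 0 < m))]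
    have := (Nat.mul_le_mul_left (n + m) (hout m)).trans
      (add_mul_card_filter_exists_lt_le (n := n) (le_of_max_le_left hm))
    exact_mod_cast (Nat.mul_le_mul_left _ (Nat.le_add_left m n)).trans (by linarith)
  exact tendsto_of_tendsto_of_tendsto_of_le_of_le' tendsto_const_nhds
    (tendsto_const_div_atTop_nhds_zero_nat _) (Eventually.of_forall fun _ => by positivity) hbound

end Finset.Nat

theorem stmt4_general {k : ℕ} (hk : 1 ≤ k) (x : (Fin k → ℕ) → ℝ) (C L : ℝ)
    (hpos : ∀ q, 0 ≤ x q) (hbdd : ∀ q, x q ≤ C)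
    (hlim : Filter.Tendsto x Filter.atTop (nhds L)) :
    Filter.Tendsto
      (fun m : ℕ =>
        (((m + k - 1).choose (k - 1) : ℝ))⁻¹ * ∑ q ∈ Finset.Nat.antidiagonalTuple k m, x q)
      Filter.atTop (nhds L) := by
  obtain ⟨n, rfl⟩ : ∃ n, k = n + 1 := ⟨k - 1, by omega⟩
  have hcard (m : ℕ) :
      (m + (n + 1) - 1).choose (n + 1 - 1) = #(Nat.antidiagonalTuple (n + 1) m) := by
    rw [Nat.card_antidiagonalTuple, show m + (n + 1) - 1 = m + n by omega,
      show n + 1 + m - 1 = m + n by omega, Nat.add_sub_cancel, Nat.choose_symm_add]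
  simp only [hcard]
  exact tendsto_average_of_tendsto hlim
    (fun q => (Real.norm_of_nonneg (hpos q)).trans_le (hbdd q))
    (Eventually.of_forall fun m => Nat.antidiagonalTuple_succ_nonempty n m)
    fun _ hU => Nat.tendsto_card_filter_notMem_div_card hU

/-- Cesàro means over the slices {q : q₁+⋯+q_k = m} of a bounded multi-sequence of
nonnegative reals, decreasing in each index, converge to its limit L along ℤ₊^k. -/
theorem stmt4 {k : ℕ} (hk : 1 ≤ k) (x : (Fin k → ℕ) → ℝ) (C L : ℝ)
    (hpos : ∀ q, 0 ≤ x q) (hbdd : ∀ q, x q ≤ C)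
    (hdec : ∀ q (i : Fin k), x (Function.update q i (q i + 1)) ≤ x q)
    (hlim : Filter.Tendsto x Filter.atTop (nhds L)) :
    Filter.Tendsto
      (fun m : ℕ =>
        (((m + k - 1).choose (k - 1) : ℝ))⁻¹ * ∑ q ∈ Finset.Nat.antidiagonalTuple k m, x q)
      Filter.atTop (nhds L) :=
  stmt4_general hk x C L hpos hbdd hlim
end

section
/- Let φ_1,...,φ_k be commuting positive linear maps on B(H) with φ_i(T^+(H)) ⊆ T^+(H) and trace(φ_i(X)) ≤ trace(X) for all positive trace-class X. Then for any positive trace-class X, lim_{m→∞} (1 / C(m+k-1, k-1)) Σ_{q_1+...+q_k = m} trace[φ_1^{q_1} ∘ ··· ∘ φ_k^{q_k}(X)] exists and equals lim over the directed set ℤ_+^k of trace[φ_1^{q_1} ∘ ··· ∘ φ_k^{q_k}(X)]. -/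
/-!
Because the `φ i` commute, `iterComp φ (p + q) = iterComp φ p ∘ iterComp φ q`, so trace
contractivity makes `q ↦ tr (φ^q X)` antitone on `ℕ^k`; it is nonnegative, hence converges along
`ℕ^k` to its infimum `L`. The averages over the simplex `{q | q₁ + ⋯ + q_k = m}` then converge to
`L` as well: the proportion of points of that simplex having some coordinate below a fixed bound
`N` is at most `N k (k - 1) / m`, since for each coordinate and each value `t < N` the points with
that coordinate equal to `t` form a simplex of one dimension less.
-/
open Filter

/-- The trace of a (positive) operator computed with respect to a Hilbert basis. -/
noncomputable def trB {H : Type*} [NormedAddCommGroup H] [InnerProductSpace ℂ H]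
    {ι : Type*} (e : HilbertBasis ι ℂ H) (A : H →L[ℂ] H) : ℝ :=
  ∑' i, (inner ℂ (e i) (A (e i)) : ℂ).re

/-- `X` is a positive trace-class operator (with respect to the Hilbert basis `e`). -/
def PTC {H : Type*} [NormedAddCommGroup H] [InnerProductSpace ℂ H] [CompleteSpace H]
    {ι : Type*} (e : HilbertBasis ι ℂ H) (X : H →L[ℂ] H) : Prop :=
  X.IsPositive ∧ Summable (fun i => (inner ℂ (e i) (X (e i)) : ℂ).re)

/-- Composition `φ₁^{q₁} ∘ ⋯ ∘ φ_k^{q_k}`. -/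
def iterComp {E : Type*} {k : ℕ} (φ : Fin k → (E → E)) (q : Fin k → ℕ) : E → E :=
  (List.finRange k).foldr (fun i f => (φ i)^[q i] ∘ f) id

open Finset Topology

section ListFoldr

variable {ι E : Type*} {φ : ι → E → E}

theorem Function.Commute.foldr_iterate {f : E → E} (hf : ∀ i, Function.Commute f (φ i))
    (q : ι → ℕ) (l : List ι) :
    Function.Commute f (l.foldr (fun i g => (φ i)^[q i] ∘ g) id) := by
  induction l with
  | nil => exact .id_right
  | cons i l ih => exact ((hf i).iterate_right (q i)).comp_right ih

theorem List.foldr_iterate_add (hφ : ∀ i j, Function.Commute (φ i) (φ j))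
    (p q : ι → ℕ) (l : List ι) :
    l.foldr (fun i g => (φ i)^[(p + q) i] ∘ g) id =
      l.foldr (fun i g => (φ i)^[p i] ∘ g) id ∘ l.foldr (fun i g => (φ i)^[q i] ∘ g) id := by
  induction l with
  | nil => rfl
  | cons i l ih =>
    have hcomm := Function.Commute.foldr_iterate (fun j => (hφ i j).iterate_left (q i)) p l
    ext x
    rw [List.foldr_cons, ih]
    simp only [List.foldr_cons, Function.comp_apply, Pi.add_apply, Function.iterate_add_apply,
      hcomm.eq]

theorem Set.MapsTo.foldr_iterate {s : Set E} (h : ∀ i, Set.MapsTo (φ i) s s) (q : ι → ℕ)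
    (l : List ι) : Set.MapsTo (l.foldr (fun i g => (φ i)^[q i] ∘ g) id) s s := by
  induction l with
  | nil => exact Set.mapsTo_id s
  | cons i l ih => exact ((h i).iterate (q i)).comp ih

end ListFoldr

section IterComp

variable {E : Type*} {k : ℕ} {φ : Fin k → E → E}

theorem iterComp_add (hφ : ∀ i j, Function.Commute (φ i) (φ j)) (p q : Fin k → ℕ) :
    iterComp φ (p + q) = iterComp φ p ∘ iterComp φ q :=
  List.foldr_iterate_add hφ p q _

theorem mapsTo_iterComp {s : Set E} (h : ∀ i, Set.MapsTo (φ i) s s) (q : Fin k → ℕ) :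
    Set.MapsTo (iterComp φ q) s s :=
  Set.MapsTo.foldr_iterate h q _

theorem iterComp_apply_le {β : Type*} [Preorder β] {s : Set E} {t : E → β}
    (hs : ∀ i, Set.MapsTo (φ i) s s) (ht : ∀ i, ∀ x ∈ s, t (φ i x) ≤ t x) (q : Fin k → ℕ)
    {x : E} (hx : x ∈ s) : t (iterComp φ q x) ≤ t x :=
  (mapsTo_iterComp (s := {y ∈ s | t y ≤ t x})
    (fun i _ hy => ⟨hs i hy.1, (ht i _ hy.1).trans hy.2⟩) q ⟨hx, le_rfl⟩).2

theorem antitone_iterComp_apply {β : Type*} [Preorder β] {s : Set E} {t : E → β}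
    (hφ : ∀ i j, Function.Commute (φ i) (φ j)) (hs : ∀ i, Set.MapsTo (φ i) s s)
    (ht : ∀ i, ∀ x ∈ s, t (φ i x) ≤ t x) {x : E} (hx : x ∈ s) :
    Antitone fun q => t (iterComp φ q x) := by
  intro p q hpq
  dsimp only
  rw [← tsub_add_cancel_of_le hpq, iterComp_add hφ, Function.comp_apply]
  exact iterComp_apply_le hs ht _ (mapsTo_iterComp hs p hx)

end IterComp

theorem Finset.sum_le_mul_card_filter_add_mul_card {α : Type*} {s : Finset α} {p : α → Prop}
    [DecidablePred p] {f : α → ℝ} {C δ : ℝ} (hC : ∀ a ∈ s, f a ≤ C) (hδ : 0 ≤ δ)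
    (hf : ∀ a ∈ s, ¬p a → f a ≤ δ) :
    ∑ a ∈ s, f a ≤ C * #{a ∈ s | p a} + δ * #s := by
  rw [← sum_filter_add_sum_filter_not s p]
  refine add_le_add ?_ ?_
  · rw [mul_comm, ← nsmul_eq_mul]
    exact sum_le_card_nsmul _ _ _ fun a ha => hC a (mem_filter.1 ha).1
  · calc ∑ a ∈ s with ¬p a, f a ≤ #{a ∈ s | ¬p a} • δ :=
          sum_le_card_nsmul _ _ _ fun a ha => hf a (mem_filter.1 ha).1 (mem_filter.1 ha).2
      _ ≤ δ * #s := by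
          rw [nsmul_eq_mul, mul_comm]
          gcongr
          exact filter_subset _ _

section AntidiagonalTuple

theorem card_antidiagonalTuple_succ (j n : ℕ) :
    #(Nat.antidiagonalTuple (j + 1) n) = (n + j).choose j := by
  rw [← piAntidiag_univ_fin_eq_antidiagonalTuple, ← map_sym_eq_piAntidiag, card_map, sym_univ,
    card_univ, Sym.card_sym_eq_choose, Fintype.card_fin, Nat.add_comm j 1, Nat.add_assoc,
    Nat.add_sub_cancel_left, Nat.add_comm j n, Nat.choose_symm_add]

theorem card_antidiagonalTuple_succ_pos (j n : ℕ) : 0 < #(Nat.antidiagonalTuple (j + 1) n) :=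
  card_antidiagonalTuple_succ j n ▸ Nat.choose_pos (Nat.le_add_left j n)

variable {j : ℕ}

theorem card_filter_antidiagonalTuple_apply_eq_le (i : Fin (j + 1)) (m t : ℕ) :
    #{q ∈ Nat.antidiagonalTuple (j + 1) m | q i = t} ≤ #(Nat.antidiagonalTuple j (m - t)) := by
  refine card_le_card_of_injOn i.removeNth (fun q hq => ?_) (fun a ha b hb hab => ?_)
  · simp only [mem_coe, mem_filter, Nat.mem_antidiagonalTuple] at hq
    rw [mem_coe, Nat.mem_antidiagonalTuple, ← hq.2, ← hq.1, Fin.sum_univ_succAbove q i]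
    simp [Fin.removeNth]
  · simp only [mem_coe, mem_filter] at ha hb
    rw [← Fin.insertNth_self_removeNth i a, ← Fin.insertNth_self_removeNth i b, ha.2, hb.2, hab]

theorem card_antidiagonalTuple_sub_mul_le {m t : ℕ} (ht : t < m) :
    #(Nat.antidiagonalTuple j (m - t)) * (m + j) ≤ j * #(Nat.antidiagonalTuple (j + 1) m) := by
  cases j with
  | zero =>
    obtain ⟨s, hs⟩ : ∃ s, m - t = s + 1 := ⟨m - t - 1, by omega⟩
    simp [hs]
  | succ j =>
    rw [card_antidiagonalTuple_succ, card_antidiagonalTuple_succ, ← Nat.add_assoc,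
      Nat.mul_comm (j + 1), ← Nat.add_one_mul_choose_eq, Nat.mul_comm]
    exact Nat.mul_le_mul_left _ (Nat.choose_le_choose j (by omega))

theorem card_filter_antidiagonalTuple_apply_lt_mul_le (i : Fin (j + 1)) {m N : ℕ} (hN : N ≤ m) :
    #{q ∈ Nat.antidiagonalTuple (j + 1) m | q i < N} * (m + j) ≤
      N * j * #(Nat.antidiagonalTuple (j + 1) m) := by
  have hsub : {q ∈ Nat.antidiagonalTuple (j + 1) m | q i < N} ⊆
      (range N).biUnion fun t => {q ∈ Nat.antidiagonalTuple (j + 1) m | q i = t} := by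
    intro q hq
    simp only [mem_filter, mem_biUnion, mem_range] at hq ⊢
    exact ⟨q i, hq.2, hq.1, rfl⟩
  calc #{q ∈ Nat.antidiagonalTuple (j + 1) m | q i < N} * (m + j)
      ≤ (∑ t ∈ range N, #(Nat.antidiagonalTuple j (m - t))) * (m + j) :=
        Nat.mul_le_mul_right _ <| (card_le_card hsub).trans <| card_biUnion_le.trans <|
          sum_le_sum fun t _ => card_filter_antidiagonalTuple_apply_eq_le i m t
    _ ≤ ∑ _t ∈ range N, j * #(Nat.antidiagonalTuple (j + 1) m) := by
        rw [sum_mul]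
        exact sum_le_sum fun t ht => card_antidiagonalTuple_sub_mul_le (by simp at ht; omega)
    _ = N * j * #(Nat.antidiagonalTuple (j + 1) m) := by simp [Nat.mul_assoc]

theorem card_filter_antidiagonalTuple_exists_lt_mul_le (q₀ : Fin (j + 1) → ℕ) {m : ℕ}
    (hm : ∀ i, q₀ i ≤ m) :
    #{q ∈ Nat.antidiagonalTuple (j + 1) m | ∃ i, q i < q₀ i} * (m + j) ≤
      (∑ i, q₀ i) * j * #(Nat.antidiagonalTuple (j + 1) m) := by
  have hsub : {q ∈ Nat.antidiagonalTuple (j + 1) m | ∃ i, q i < q₀ i} ⊆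
      univ.biUnion fun i => {q ∈ Nat.antidiagonalTuple (j + 1) m | q i < q₀ i} := by
    intro q hq
    simp only [mem_filter, mem_biUnion, mem_univ, true_and] at hq ⊢
    exact hq.2.imp fun i hi => ⟨hq.1, hi⟩
  calc #{q ∈ Nat.antidiagonalTuple (j + 1) m | ∃ i, q i < q₀ i} * (m + j)
      ≤ ∑ i, #{q ∈ Nat.antidiagonalTuple (j + 1) m | q i < q₀ i} * (m + j) := by
        rw [← sum_mul]
        exact Nat.mul_le_mul_right _ ((card_le_card hsub).trans card_biUnion_le)
    _ ≤ ∑ i, q₀ i * j * #(Nat.antidiagonalTuple (j + 1) m) :=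
        sum_le_sum fun i _ => card_filter_antidiagonalTuple_apply_lt_mul_le i (hm i)
    _ = (∑ i, q₀ i) * j * #(Nat.antidiagonalTuple (j + 1) m) := by
        rw [sum_mul, sum_mul]

theorem tendsto_card_filter_antidiagonalTuple_exists_lt_div (q₀ : Fin (j + 1) → ℕ) :
    Tendsto (fun m => (#{q ∈ Nat.antidiagonalTuple (j + 1) m | ∃ i, q i < q₀ i} : ℝ) /
      #(Nat.antidiagonalTuple (j + 1) m)) atTop (𝓝 0) := by
  have hbound : Tendsto (fun m => ((∑ i, q₀ i) * j : ℕ) / ((m + j : ℕ) : ℝ)) atTop (𝓝 0) :=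
    (tendsto_const_div_atTop_nhds_zero_nat _).comp (tendsto_add_atTop_nat j)
  refine tendsto_of_tendsto_of_tendsto_of_le_of_le' tendsto_const_nhds hbound
    (Eventually.of_forall fun m => by positivity) ?_
  filter_upwards [eventually_ge_atTop (univ.sup q₀), eventually_gt_atTop 0] with m hm hm₀
  rw [div_le_div_iff₀ (by exact_mod_cast card_antidiagonalTuple_succ_pos j m) (by positivity)]
  exact_mod_cast card_filter_antidiagonalTuple_exists_lt_mul_le q₀
    fun i => (le_sup (mem_univ i)).trans hm

theorem tendsto_average_antidiagonalTuple {E : Type*} [NormedAddCommGroup E] [NormedSpace ℝ E]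
    {g : (Fin (j + 1) → ℕ) → E} {L : E} (hg : Tendsto g atTop (𝓝 L))
    (hb : Bornology.IsBounded (Set.range g)) :
    Tendsto (fun m => (#(Nat.antidiagonalTuple (j + 1) m) : ℝ)⁻¹ •
      ∑ q ∈ Nat.antidiagonalTuple (j + 1) m, g q) atTop (𝓝 L) := by
  obtain ⟨C, hC⟩ := isBounded_iff_forall_norm_le.1 hb
  have hgL : ∀ q, ‖g q - L‖ ≤ C + ‖L‖ := fun q =>
    (norm_sub_le _ _).trans (add_le_add_left (hC _ (Set.mem_range_self q)) _)
  rw [Metric.tendsto_nhds]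
  intro ε hε
  obtain ⟨q₀, hq₀⟩ := eventually_atTop.1 (Metric.tendsto_nhds.1 hg (ε / 2) (half_pos hε))
  have hbad := ((tendsto_card_filter_antidiagonalTuple_exists_lt_div q₀).const_mul
    (C + ‖L‖)).eventually (gt_mem_nhds (by rw [mul_zero]; exact half_pos hε))
  filter_upwards [hbad] with m hm
  set A := Nat.antidiagonalTuple (j + 1) m
  set B := {q ∈ A | ∃ i, q i < q₀ i}
  have hA : (0 : ℝ) < #A := by exact_mod_cast card_antidiagonalTuple_succ_pos j m
  have hsplit : ∑ q ∈ A, ‖g q - L‖ ≤ (C + ‖L‖) * #B + ε / 2 * #A :=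
    sum_le_mul_card_filter_add_mul_card (fun q _ => hgL q) (half_pos hε).le fun q _ hq =>
      dist_eq_norm (g q) L ▸ (hq₀ q fun i => not_lt.1 fun h => hq ⟨i, h⟩).le
  calc dist ((#A : ℝ)⁻¹ • ∑ q ∈ A, g q) L
        = ‖(#A : ℝ)⁻¹ • ∑ q ∈ A, (g q - L)‖ := by
        rw [dist_eq_norm, sum_sub_distrib, sum_const, ← Nat.cast_smul_eq_nsmul ℝ, smul_sub,
          smul_smul, inv_mul_cancel₀ hA.ne', one_smul]
    _ ≤ (#A : ℝ)⁻¹ * ∑ q ∈ A, ‖g q - L‖ := by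
        rw [norm_smul, Real.norm_of_nonneg (by positivity)]
        exact mul_le_mul_of_nonneg_left (norm_sum_le _ _) (by positivity)
    _ ≤ (#A : ℝ)⁻¹ * ((C + ‖L‖) * #B + ε / 2 * #A) := by gcongr
    _ = (C + ‖L‖) * (#B / #A) + ε / 2 := by field_simp
    _ < ε := by linarith

end AntidiagonalTuple

theorem trB_nonneg {H : Type*} [NormedAddCommGroup H] [InnerProductSpace ℂ H] {ι : Type*}
    (e : HilbertBasis ι ℂ H) {A : H →L[ℂ] H} (hA : A.IsPositive) : 0 ≤ trB e A :=
  tsum_nonneg fun i => hA.re_inner_nonneg_right (e i)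

theorem stmt7_general {H : Type*} [NormedAddCommGroup H] [InnerProductSpace ℂ H] [CompleteSpace H]
    {ι : Type*} (e : HilbertBasis ι ℂ H) {k : ℕ} (hk : 1 ≤ k)
    (φ : Fin k → ((H →L[ℂ] H) →ₗ[ℂ] (H →L[ℂ] H)))
    (hcomm : ∀ i j, (φ i).comp (φ j) = (φ j).comp (φ i))
    (hptc : ∀ i (X : H →L[ℂ] H), PTC e X → PTC e (φ i X))
    (htr : ∀ i (X : H →L[ℂ] H), PTC e X → trB e (φ i X) ≤ trB e X)
    (X : H →L[ℂ] H) (hX : PTC e X) :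
    ∃ L : ℝ,
      Filter.Tendsto (fun q : Fin k → ℕ => trB e (iterComp (fun i A => φ i A) q X))
          Filter.atTop (nhds L) ∧
        Filter.Tendsto
          (fun m : ℕ =>
            (((m + k - 1).choose (k - 1) : ℝ))⁻¹ *
              ∑ q ∈ Finset.Nat.antidiagonalTuple k m,
                trB e (iterComp (fun i A => φ i A) q X))
          Filter.atTop (nhds L) := by
  obtain ⟨j, rfl⟩ : ∃ j, k = j + 1 := ⟨k - 1, by omega⟩
  set g := fun q : Fin (j + 1) → ℕ => trB e (iterComp (fun i A => φ i A) q X)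
  have hanti : Antitone g :=
    antitone_iterComp_apply (s := {Y | PTC e Y}) (fun i i' => LinearMap.congr_fun (hcomm i i'))
      (fun i _ => hptc i _) htr hX
  have hmem : ∀ q, g q ∈ Set.Icc 0 (g 0) := fun q =>
    ⟨trB_nonneg e (mapsTo_iterComp (s := {Y | PTC e Y}) (fun i _ => hptc i _) q hX).1,
      hanti fun i => Nat.zero_le (q i)⟩
  have hlim : Tendsto g atTop (𝓝 (⨅ q, g q)) :=
    tendsto_atTop_ciInf hanti ⟨0, Set.forall_mem_range.2 fun q => (hmem q).1⟩
  refine ⟨_, hlim, ?_⟩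
  have hbdd : Bornology.IsBounded (Set.range g) :=
    Metric.isBounded_Icc 0 (g 0) |>.subset (Set.range_subset_iff.2 hmem)
  simpa [card_antidiagonalTuple_succ] using tendsto_average_antidiagonalTuple hlim hbdd

/-- For commuting positive trace-contractive maps on B(H) and positive trace-class X, the
Cesàro means over {q : q₁+⋯+q_k = m} of trace[φ₁^{q₁}∘⋯∘φ_k^{q_k}(X)] converge to the limit
of that net along ℤ₊^k. -/
theorem stmt7 {H : Type*} [NormedAddCommGroup H] [InnerProductSpace ℂ H] [CompleteSpace H]
    {ι : Type*} (e : HilbertBasis ι ℂ H) {k : ℕ} (hk : 1 ≤ k)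
    (φ : Fin k → ((H →L[ℂ] H) →ₗ[ℂ] (H →L[ℂ] H)))
    (hcomm : ∀ i j, (φ i).comp (φ j) = (φ j).comp (φ i))
    (hpos : ∀ i (A : H →L[ℂ] H), A.IsPositive → (φ i A).IsPositive)
    (hptc : ∀ i (X : H →L[ℂ] H), PTC e X → PTC e (φ i X))
    (htr : ∀ i (X : H →L[ℂ] H), PTC e X → trB e (φ i X) ≤ trB e X)
    (X : H →L[ℂ] H) (hX : PTC e X) :
    ∃ L : ℝ,
      Filter.Tendsto (fun q : Fin k → ℕ => trB e (iterComp (fun i A => φ i A) q X))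
          Filter.atTop (nhds L) ∧
        Filter.Tendsto
          (fun m : ℕ =>
            (((m + k - 1).choose (k - 1) : ℝ))⁻¹ *
              ∑ q ∈ Finset.Nat.antidiagonalTuple k m,
                trB e (iterComp (fun i A => φ i A) q X))
          Filter.atTop (nhds L) :=
  stmt7_general e hk φ hcomm hptc htr X hX
end

section
/- Let φ_1,...,φ_k be commuting positive linear maps on B(H) such that each φ_i is pure, i.e., φ_i^n(I) → 0 in the weak operator topology as n → ∞. Set Δ_φ := (id − φ_1) ∘ ··· ∘ (id − φ_k). Then Δ_φ is injective, and every X ∈ B(H) satisfies X = Σ_{s_k≥0} φ_k^{s_k}( Σ_{s_{k-1}≥0} φ_{k-1}^{s_{k-1}}( ··· Σ_{s_1≥0} φ_1^{s_1}(Δ_φ(X)) ··· )), where the iterated series converge in the weak operator topology. -/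
/-!
A positive map ψ on B(H) satisfies 0 ≤ ψⁿ(A) ≤ ‖A‖ ψⁿ(1) for A ≥ 0, so purity forces
⟨ψⁿ(A)z, z⟩ → 0 for positive A; by polarization and because positive operators span B(H),
ψⁿ(A) → 0 in the weak operator topology for every A. Hence id − ψ has no nonzero fixed
point, and the telescoping sums Σ_{s ≤ q} ψˢ(W − ψW) = W − ψ^{q+1}(W) converge weakly to W.
Writing Y_j = (id − φ_j) ∘ ⋯ ∘ (id − φ_{k-1}) (X) (indices from 0), one has Y₀ = Δ_φ(X),
Y_k = X and Y_j = (id − φ_j)(Y_{j+1}), so each Y_{j+1} is the weak sum of the series in φ_j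
applied to Y_j; injectivity of Δ_φ is that of its factors.
-/

open Filter

/-- The defect map `Δ_φ = (id − φ₁) ∘ ⋯ ∘ (id − φ_k)`. -/
def defectMap {H : Type*} [NormedAddCommGroup H] [InnerProductSpace ℂ H] {k : ℕ}
    (φ : Fin k → ((H →L[ℂ] H) →ₗ[ℂ] (H →L[ℂ] H))) : (H →L[ℂ] H) → (H →L[ℂ] H) :=
  (List.finRange k).foldr (fun i f => (fun A => A - φ i A) ∘ f) id

theorem List.injective_foldr_comp {ι α : Type*} {g : ι → α → α}
    (hg : ∀ i, Function.Injective (g i)) (l : List ι) :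
    Function.Injective (l.foldr (fun i f => g i ∘ f) id) := by
  induction l with
  | nil => exact Function.injective_id
  | cons i l ih => exact (hg i).comp ih

theorem List.drop_finRange_eq_cons {k : ℕ} (j : Fin k) :
    (List.finRange k).drop j = j :: (List.finRange k).drop (j + 1) := by
  rw [List.drop_eq_getElem_cons (by simp), List.getElem_finRange]
  rfl

theorem Module.End.sum_range_iterate_apply_sub {R M : Type*} [Ring R] [AddCommGroup M]
    [Module R M] (ψ : Module.End R M) (W : M) (n : ℕ) :
    ∑ s ∈ Finset.range n, ψ^[s] (W - ψ W) = W - ψ^[n] W := by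
  have hstep : ∀ s, ψ^[s] (W - ψ W) = ψ^[s] W - ψ^[s + 1] W := fun s => by
    rw [← Module.End.coe_pow, map_sub, Module.End.coe_pow, Function.iterate_succ_apply]
  simp_rw [hstep]
  exact Finset.sum_range_sub' _ n

namespace ContinuousLinearMap

open Topology ComplexOrder Function

variable {H : Type*} [NormedAddCommGroup H] [InnerProductSpace ℂ H]

theorem inner_apply_self_le_of_le {A B : H →L[ℂ] H} (h : A ≤ B) (z : H) :
    inner ℂ (A z) z ≤ inner ℂ (B z) z := by
  have := ((le_def A B).mp h).inner_nonneg_left z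
  rwa [sub_apply, inner_sub_left, sub_nonneg] at this

theorem tendsto_inner_apply_of_tendsto_inner_self {ι : Type*} {l : Filter ι}
    {T : ι → H →L[ℂ] H} (hT : ∀ z, Tendsto (fun n => inner ℂ (T n z) z) l (𝓝 0)) (x y : H) :
    Tendsto (fun n => inner ℂ (T n x) y) l (𝓝 0) := by
  have h := (((hT (x + y)).sub (hT (x - y))).sub ((hT (x + Complex.I • y)).const_mul Complex.I)
    |>.add ((hT (x - Complex.I • y)).const_mul Complex.I)).div_const 4
  simp only [sub_zero, mul_zero, add_zero, zero_div] at h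
  exact h.congr fun n => (inner_map_polarization' (T n : H →ₗ[ℂ] H) x y).symm

variable [CompleteSpace H]

section PositiveMaps

variable {ι : Type*} {l : Filter ι} {T : ι → Module.End ℂ (H →L[ℂ] H)}
  (hT : ∀ n A, 0 ≤ A → 0 ≤ T n A)
include hT

theorem tendsto_inner_self_apply_of_nonneg {z : H}
    (hz : Tendsto (fun n => inner ℂ (T n 1 z) z) l (𝓝 0)) {A : H →L[ℂ] H} (hA : 0 ≤ A) :
    Tendsto (fun n => inner ℂ (T n A z) z) l (𝓝 0) := by
  have hle : ∀ n, T n A ≤ ‖A‖ • T n 1 := fun n => by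
    have := hT n _ (sub_nonneg.mpr (IsSelfAdjoint.of_nonneg hA).le_algebraMap_norm_self)
    rwa [Algebra.algebraMap_eq_smul_one, map_sub, LinearMap.map_smul_of_tower, sub_nonneg] at this
  refine squeeze_zero_norm (fun n => ?_) (by simpa using (hz.const_mul (‖A‖ : ℂ)).norm)
  have := CStarAlgebra.norm_le_norm_of_nonneg_of_le
    (((nonneg_iff_isPositive _).mp (hT n A hA)).inner_nonneg_left z)
    (inner_apply_self_le_of_le (hle n) z)
  simpa [inner_smul_real_left] using this

theorem tendsto_inner_apply_of_tendsto_inner_map_one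
    (h1 : ∀ z, Tendsto (fun n => inner ℂ (T n 1 z) z) l (𝓝 0)) (A : H →L[ℂ] H) (x y : H) :
    Tendsto (fun n => inner ℂ (T n A x) y) l (𝓝 0) := by
  have hA : A ∈ Submodule.span ℂ {a | 0 ≤ a} := by rw [CStarAlgebra.span_nonneg]; trivial
  induction hA using Submodule.span_induction generalizing x y with
  | mem A hA =>
    exact tendsto_inner_apply_of_tendsto_inner_self
      (fun z => tendsto_inner_self_apply_of_nonneg hT (h1 z) hA) x y
  | zero => simpa using tendsto_const_nhds
  | add A B _ _ hA hB => simpa [inner_add_left] using (hA x y).add (hB x y)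
  | smul c A _ hA => simpa [inner_smul_left] using (hA x y).mul_const (starRingEnd ℂ c)

end PositiveMaps

section PureMaps

variable {ψ : Module.End ℂ (H →L[ℂ] H)} (hψ : ∀ A, 0 ≤ A → 0 ≤ ψ A)
  (hpure : ∀ z, Tendsto (fun n => inner ℂ (ψ^[n] 1 z) z) atTop (𝓝 0))
include hψ hpure

theorem tendsto_inner_iterate_apply (A : H →L[ℂ] H) (x y : H) :
    Tendsto (fun n => inner ℂ (ψ^[n] A x) y) atTop (𝓝 0) := by
  have hpos : ∀ n A, 0 ≤ A → 0 ≤ (ψ ^ n) A := fun n A hA => by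
    rw [Module.End.coe_pow]
    exact Iterate.rec (fun B => 0 ≤ B) hA hψ n
  simp only [← Module.End.coe_pow] at hpure ⊢
  exact tendsto_inner_apply_of_tendsto_inner_map_one hpos hpure A x y

theorem eq_zero_of_apply_eq_self {W : H →L[ℂ] H} (hW : ψ W = W) : W = 0 := by
  have hinner : ∀ x y, inner ℂ (W x) y = 0 := fun x y =>
    tendsto_nhds_unique tendsto_const_nhds
      (by simpa only [iterate_fixed hW] using tendsto_inner_iterate_apply hψ hpure W x y)
  ext x
  exact inner_self_eq_zero.mp (hinner x (W x))

theorem injective_sub_apply : Injective fun A => A - ψ A := fun A B h => by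
  have hfix : ψ (A - B) = A - B := by
    rw [map_sub]; exact (sub_eq_sub_iff_sub_eq_sub.mp h).symm
  exact sub_eq_zero.mp (eq_zero_of_apply_eq_self hψ hpure hfix)

theorem tendsto_inner_sum_range_iterate_apply_sub (W : H →L[ℂ] H) (x y : H) :
    Tendsto (fun q => inner ℂ ((∑ s ∈ Finset.range (q + 1), ψ^[s] (W - ψ W)) x) y) atTop
      (𝓝 (inner ℂ (W x) y)) := by
  simp only [Module.End.sum_range_iterate_apply_sub, sub_apply, inner_sub_left]
  simpa using tendsto_const_nhds.sub
    ((tendsto_inner_iterate_apply hψ hpure W x y).comp (tendsto_add_atTop_nat 1))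

end PureMaps

end ContinuousLinearMap

theorem stmt9_general {H : Type*} [NormedAddCommGroup H] [InnerProductSpace ℂ H] [CompleteSpace H]
    {k : ℕ} (φ : Fin k → ((H →L[ℂ] H) →ₗ[ℂ] (H →L[ℂ] H)))
    (hpos : ∀ i (A : H →L[ℂ] H), A.IsPositive → (φ i A).IsPositive)
    (hpure : ∀ i (x y : H),
      Filter.Tendsto (fun n : ℕ => (inner ℂ (((fun A => φ i A)^[n] (1 : H →L[ℂ] H)) x) y : ℂ))
        Filter.atTop (nhds 0)) :
    Function.Injective (defectMap φ) ∧
      ∀ X : H →L[ℂ] H, ∃ Y : Fin (k + 1) → (H →L[ℂ] H),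
        Y 0 = defectMap φ X ∧
        (∀ (j : Fin k) (x y : H),
          Filter.Tendsto
            (fun q : ℕ =>
              (inner ℂ ((∑ s ∈ Finset.range (q + 1),
                (fun A => φ j A)^[s] (Y j.castSucc)) x) y : ℂ))
            Filter.atTop (nhds (inner ℂ ((Y j.succ) x) y : ℂ))) ∧
        Y (Fin.last k) = X := by
  have hpos' : ∀ i A, 0 ≤ A → 0 ≤ φ i A := by
    simpa only [ContinuousLinearMap.nonneg_iff_isPositive] using hpos
  have hpure' : ∀ i z, Tendsto (fun n => inner ℂ ((φ i)^[n] 1 z) z) atTop (nhds 0) :=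
    fun i z => hpure i z z
  refine ⟨List.injective_foldr_comp
      (fun i => ContinuousLinearMap.injective_sub_apply (hpos' i) (hpure' i)) _,
    fun X => ⟨fun j => ((List.finRange k).drop j).foldr (fun i f => (fun A => A - φ i A) ∘ f) id X,
      by simp [defectMap], fun j x y => ?_, by simp [List.drop_eq_nil_of_le]⟩⟩
  simp only [Fin.val_castSucc, Fin.val_succ, List.drop_finRange_eq_cons j, List.foldr_cons]
  exact ContinuousLinearMap.tendsto_inner_sum_range_iterate_apply_sub (hpos' j) (hpure' j) _ x y

/-- For commuting pure positive linear maps φ₁,…,φ_k on B(H), the defect map Δ_φ is injective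
and every X is recovered by the iterated series
X = Σ_{s_k} φ_k^{s_k}(⋯ Σ_{s₁} φ₁^{s₁}(Δ_φ(X)) ⋯), with WOT-convergent partial sums at each
stage: Y₀ = Δ_φ(X), Y_{j+1} = WOT-Σ_{s≥0} φ_{j+1}^{s}(Y_j), and Y_k = X. -/
theorem stmt9 {H : Type*} [NormedAddCommGroup H] [InnerProductSpace ℂ H] [CompleteSpace H]
    {k : ℕ} (φ : Fin k → ((H →L[ℂ] H) →ₗ[ℂ] (H →L[ℂ] H)))
    (hcomm : ∀ i j, (φ i).comp (φ j) = (φ j).comp (φ i))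
    (hpos : ∀ i (A : H →L[ℂ] H), A.IsPositive → (φ i A).IsPositive)
    (hpure : ∀ i (x y : H),
      Filter.Tendsto (fun n : ℕ => (inner ℂ (((fun A => φ i A)^[n] (1 : H →L[ℂ] H)) x) y : ℂ))
        Filter.atTop (nhds 0)) :
    Function.Injective (defectMap φ) ∧
      ∀ X : H →L[ℂ] H, ∃ Y : Fin (k + 1) → (H →L[ℂ] H),
        Y 0 = defectMap φ X ∧
        (∀ (j : Fin k) (x y : H),
          Filter.Tendsto
            (fun q : ℕ =>
              (inner ℂ ((∑ s ∈ Finset.range (q + 1),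
                (fun A => φ j A)^[s] (Y j.castSucc)) x) y : ℂ))
            Filter.atTop (nhds (inner ℂ ((Y j.succ) x) y : ℂ))) ∧
        Y (Fin.last k) = X :=
  stmt9_general φ hpos hpure
end
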